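/- Let U be an open subset of the half-plane {(ρ,z) ∈ ℝ² : ρ > 0} and let σ, ω : U → ℝ be twice continuously differentiable functions satisfying the reduced vacuum Einstein equations Δσ = −e^{−2σ}(ω_ρ² + ω_z²)/ρ⁴ and Δω = 4ω_ρ/ρ + 2(ω_ρσ_ρ + ω_zσ_z) on U. Set η = ρ²e^σ and define P(ρ,z) = (ρ/4)(σ_ρ² − σ_z²) + (ρ/(4η²))(ω_ρ² − ω_z²) and Q(ρ,z) = (ρ/2)(σ_ρσ_z + η^{−2}ω_ρω_z). Then the 1-form P dρ + Q dz is closed on U, i.e. ∂_z P = ∂_ρ Q at every point of U. -/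

import Mathlib

/-!
Both components of the form are differentiated by the chain rule, using that
`η = ρ² e^σ` satisfies `∂_z η = η σ_z` and `∂_ρ η = η (2/ρ + σ_ρ)`. Once the mixed partials of
`σ` and `ω` are identified (Schwarz), `∂_ρ Q - ∂_z P` is `ρ σ_z / 2` times the `σ`-equation plus
`ρ ω_z / (2 η²)` times the `ω`-equation, so it vanishes on solutions.
-/

/-- Partial derivative with respect to the first (ρ) variable. -/
noncomputable def pdr (f : ℝ × ℝ → ℝ) (p : ℝ × ℝ) : ℝ :=
  deriv (fun x => f (x, p.2)) p.1

/-- Partial derivative with respect to the second (z) variable. -/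
noncomputable def pdz (f : ℝ × ℝ → ℝ) (p : ℝ × ℝ) : ℝ :=
  deriv (fun y => f (p.1, y)) p.2

/-- The flat cylindrically symmetric Laplacian Δ = ∂²_ρ + (1/ρ)∂_ρ + ∂²_z. -/
noncomputable def lap (f : ℝ × ℝ → ℝ) (p : ℝ × ℝ) : ℝ :=
  pdr (pdr f) p + pdr f p / p.1 + pdz (pdz f) p

open Topology

section PartialDerivatives

variable {f : ℝ × ℝ → ℝ} {p : ℝ × ℝ}

theorem hasDerivAt_pdr (hf : DifferentiableAt ℝ f p) :
    HasDerivAt (fun x => f (x, p.2)) (pdr f p) p.1 :=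
  (hf.comp p.1 (differentiableAt_id.prodMk (differentiableAt_const _))).hasDerivAt

theorem hasDerivAt_pdz (hf : DifferentiableAt ℝ f p) :
    HasDerivAt (fun y => f (p.1, y)) (pdz f p) p.2 :=
  (hf.comp p.2 ((differentiableAt_const _).prodMk differentiableAt_id)).hasDerivAt

theorem pdr_eq_fderiv (hf : DifferentiableAt ℝ f p) : pdr f p = fderiv ℝ f p (1, 0) :=
  (hf.hasFDerivAt.comp_hasDerivAt p.1
    ((hasDerivAt_id p.1).prodMk (hasDerivAt_const p.1 p.2))).deriv

theorem pdz_eq_fderiv (hf : DifferentiableAt ℝ f p) : pdz f p = fderiv ℝ f p (0, 1) :=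
  (hf.hasFDerivAt.comp_hasDerivAt p.2
    ((hasDerivAt_const p.2 p.1).prodMk (hasDerivAt_id p.2))).deriv

theorem ContDiffAt.pdr_eventuallyEq (hf : ContDiffAt ℝ 2 f p) :
    pdr f =ᶠ[𝓝 p] fun q => fderiv ℝ f q (1, 0) := by
  filter_upwards [hf.eventually (by simp)] with q hq
  exact pdr_eq_fderiv (hq.differentiableAt (by norm_num))

theorem ContDiffAt.pdz_eventuallyEq (hf : ContDiffAt ℝ 2 f p) :
    pdz f =ᶠ[𝓝 p] fun q => fderiv ℝ f q (0, 1) := by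
  filter_upwards [hf.eventually (by simp)] with q hq
  exact pdz_eq_fderiv (hq.differentiableAt (by norm_num))

theorem ContDiffAt.differentiableAt_fderiv_apply (hf : ContDiffAt ℝ 2 f p) (v : ℝ × ℝ) :
    DifferentiableAt ℝ (fun q => fderiv ℝ f q v) p :=
  ((hf.fderiv_right (m := 1) le_rfl).clm_apply contDiffAt_const).differentiableAt one_ne_zero

theorem ContDiffAt.differentiableAt_pdr (hf : ContDiffAt ℝ 2 f p) :
    DifferentiableAt ℝ (pdr f) p :=
  hf.pdr_eventuallyEq.differentiableAt_iff.mpr (hf.differentiableAt_fderiv_apply _)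

theorem ContDiffAt.differentiableAt_pdz (hf : ContDiffAt ℝ 2 f p) :
    DifferentiableAt ℝ (pdz f) p :=
  hf.pdz_eventuallyEq.differentiableAt_iff.mpr (hf.differentiableAt_fderiv_apply _)

theorem ContDiffAt.pdz_pdr (hf : ContDiffAt ℝ 2 f p) : pdz (pdr f) p = pdr (pdz f) p := by
  have hr : pdz (pdr f) p = pdz (fun q => fderiv ℝ f q (1, 0)) p :=
    hf.pdr_eventuallyEq.comp_tendsto ((Continuous.prodMk_right p.1).tendsto p.2) |>.deriv_eq
  have hz : pdr (pdz f) p = pdr (fun q => fderiv ℝ f q (0, 1)) p :=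
    hf.pdz_eventuallyEq.comp_tendsto ((Continuous.prodMk_left p.2).tendsto p.1) |>.deriv_eq
  have hdiff : DifferentiableAt ℝ (fderiv ℝ f) p :=
    (hf.fderiv_right (m := 1) le_rfl).differentiableAt one_ne_zero
  rw [hr, hz, pdz_eq_fderiv (hf.differentiableAt_fderiv_apply _),
    pdr_eq_fderiv (hf.differentiableAt_fderiv_apply _),
    fderiv_clm_apply hdiff (differentiableAt_const _),
    fderiv_clm_apply hdiff (differentiableAt_const _)]
  simp [hf.isSymmSndFDerivAt (by simp) (0, 1) (1, 0)]

end PartialDerivatives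

section QForm

open Real

variable {σ ω : ℝ × ℝ → ℝ} {p : ℝ × ℝ}

noncomputable def eta (σ : ℝ × ℝ → ℝ) (p : ℝ × ℝ) : ℝ := p.1 ^ 2 * exp (σ p)

noncomputable def qFormP (σ ω : ℝ × ℝ → ℝ) (p : ℝ × ℝ) : ℝ :=
  p.1 / 4 * (pdr σ p ^ 2 - pdz σ p ^ 2) + p.1 / (4 * eta σ p ^ 2) * (pdr ω p ^ 2 - pdz ω p ^ 2)

noncomputable def qFormQ (σ ω : ℝ × ℝ → ℝ) (p : ℝ × ℝ) : ℝ :=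
  p.1 / 2 * (pdr σ p * pdz σ p + pdr ω p * pdz ω p / eta σ p ^ 2)

theorem eta_ne_zero (hp : p.1 ≠ 0) : eta σ p ≠ 0 := by
  unfold eta; positivity

theorem hasDerivAt_eta_z (hσ : DifferentiableAt ℝ σ p) :
    HasDerivAt (fun y => eta σ (p.1, y)) (eta σ p * pdz σ p) p.2 := by
  refine ((hasDerivAt_pdz hσ).exp.const_mul (p.1 ^ 2)).congr_deriv ?_
  simp only [eta, Prod.mk.eta]
  ring

theorem hasDerivAt_eta_rho (hσ : DifferentiableAt ℝ σ p) :
    HasDerivAt (fun x => eta σ (x, p.2)) ((2 * p.1 + p.1 ^ 2 * pdr σ p) * exp (σ p)) p.1 := by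
  refine ((hasDerivAt_pow 2 p.1).mul (hasDerivAt_pdr hσ).exp).congr_deriv ?_
  simp only [Prod.mk.eta]
  ring

theorem pdz_qFormP (hp : p.1 ≠ 0) (hσ : ContDiffAt ℝ 2 σ p) (hω : ContDiffAt ℝ 2 ω p) :
    pdz (qFormP σ ω) p =
      p.1 / 2 * (pdr σ p * pdz (pdr σ) p - pdz σ p * pdz (pdz σ) p)
        + p.1 / (2 * eta σ p ^ 2) * (pdr ω p * pdz (pdr ω) p - pdz ω p * pdz (pdz ω) p
          - pdz σ p * (pdr ω p ^ 2 - pdz ω p ^ 2)) := by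
  have hη := hasDerivAt_eta_z (hσ.differentiableAt (by norm_num))
  have h := ((((hasDerivAt_pdz hσ.differentiableAt_pdr).pow 2).sub
      ((hasDerivAt_pdz hσ.differentiableAt_pdz).pow 2)).const_mul (p.1 / 4)).add
    (((hasDerivAt_const p.2 p.1).div ((hη.pow 2).const_mul 4) (by simp [eta_ne_zero hp])).mul
      (((hasDerivAt_pdz hω.differentiableAt_pdr).pow 2).sub
        ((hasDerivAt_pdz hω.differentiableAt_pdz).pow 2)))
  refine h.deriv.trans ?_
  have hη0 := eta_ne_zero (σ := σ) hp
  simp only [Prod.mk.eta, Pi.pow_apply, Pi.sub_apply, Pi.div_apply, Nat.cast_ofNat]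
  field_simp
  ring

theorem pdr_qFormQ (hp : p.1 ≠ 0) (hσ : ContDiffAt ℝ 2 σ p) (hω : ContDiffAt ℝ 2 ω p) :
    pdr (qFormQ σ ω) p =
      (pdr σ p * pdz σ p + pdr ω p * pdz ω p / eta σ p ^ 2) / 2
        + p.1 / 2 * (pdr (pdr σ) p * pdz σ p + pdr σ p * pdr (pdz σ) p)
        + p.1 / (2 * eta σ p ^ 2) * (pdr (pdr ω) p * pdz ω p + pdr ω p * pdr (pdz ω) p)
        - (2 + p.1 * pdr σ p) * pdr ω p * pdz ω p / eta σ p ^ 2 := by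
  have hη := hasDerivAt_eta_rho (hσ.differentiableAt (by norm_num))
  have h := ((hasDerivAt_id p.1).div_const 2).mul
    (((hasDerivAt_pdr hσ.differentiableAt_pdr).mul (hasDerivAt_pdr hσ.differentiableAt_pdz)).add
      (((hasDerivAt_pdr hω.differentiableAt_pdr).mul (hasDerivAt_pdr hω.differentiableAt_pdz)).div
        (hη.pow 2) (by simp [eta_ne_zero hp])))
  refine h.deriv.trans ?_
  have hη0 := eta_ne_zero (σ := σ) hp
  simp only [Prod.mk.eta, Pi.mul_apply, Pi.pow_apply, Pi.add_apply, Pi.div_apply, id,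
    Nat.cast_ofNat]
  field_simp
  simp only [eta]
  ring

theorem exp_neg_two_mul_eq (hp : p.1 ≠ 0) : exp (-2 * σ p) = p.1 ^ 4 / eta σ p ^ 2 := by
  rw [eta, mul_pow, ← exp_nat_mul, neg_mul, exp_neg, Nat.cast_ofNat]
  field_simp

end QForm

theorem closedness_of_q_oneform
    (U : Set (ℝ × ℝ)) (hU : IsOpen U) (hUpos : ∀ p ∈ U, 0 < p.1)
    (σ ω : ℝ × ℝ → ℝ)
    (hσ : ContDiffOn ℝ 2 σ U) (hω : ContDiffOn ℝ 2 ω U)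
    (heqσ : ∀ p ∈ U, lap σ p =
      - Real.exp (-2 * σ p) * ((pdr ω p) ^ 2 + (pdz ω p) ^ 2) / p.1 ^ 4)
    (heqω : ∀ p ∈ U, lap ω p =
      4 * pdr ω p / p.1 + 2 * (pdr ω p * pdr σ p + pdz ω p * pdz σ p))
    (η P Q : ℝ × ℝ → ℝ)
    (hη : ∀ p, η p = p.1 ^ 2 * Real.exp (σ p))
    (hP : ∀ p, P p = p.1 / 4 * ((pdr σ p) ^ 2 - (pdz σ p) ^ 2)
        + p.1 / (4 * (η p) ^ 2) * ((pdr ω p) ^ 2 - (pdz ω p) ^ 2))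
    (hQ : ∀ p, Q p = p.1 / 2 * (pdr σ p * pdz σ p + pdr ω p * pdz ω p / (η p) ^ 2)) :
    ∀ p ∈ U, pdz P p = pdr Q p := by
  obtain rfl : P = qFormP σ ω := funext fun p => by rw [hP, qFormP, eta, hη]
  obtain rfl : Q = qFormQ σ ω := funext fun p => by rw [hQ, qFormQ, eta, hη]
  intro p hp
  have hρ : p.1 ≠ 0 := (hUpos p hp).ne'
  have hσp : ContDiffAt ℝ 2 σ p := hσ.contDiffAt (hU.mem_nhds hp)
  have hωp : ContDiffAt ℝ 2 ω p := hω.contDiffAt (hU.mem_nhds hp)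
  have eσ := heqσ p hp
  have eω := heqω p hp
  rw [lap, exp_neg_two_mul_eq hρ] at eσ
  rw [lap] at eω
  rw [pdz_qFormP hρ hσp hωp, pdr_qFormQ hρ hσp hωp, hσp.pdz_pdr, hωp.pdz_pdr]
  have hη0 := eta_ne_zero (σ := σ) hρ
  linear_combination (norm := skip)
    (-(p.1 * pdz σ p / 2)) * eσ - (p.1 * pdz ω p / (2 * eta σ p ^ 2)) * eω
  field_simp
  ring
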